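/- arXiv:2403.03122 — 2 statements merged into one kernel-verified Lean document; each statement's English description precedes it below -/
import Mathlib

section
/- For a unit quaternion q with q1 ≠ −1 and e = (1,0,0,0)ᵀ, the composed map v ↦ rotation-then-projection Π_q(v) = P v − (⟨e, Pv⟩/(1+⟨q,e⟩))(q+e), where P = I − qqᵀ, always outputs a vector with first coordinate zero, i.e., Π_q(v) lies in the tangent space at e. -/
open RealInnerProductSpace

/-- Subtracting the right multiple of `q + e` kills the `e`-component, because `⟪e, q + e⟫ = 1 + ⟪q, e⟫`
for a unit vector `e`. -/
theorem inner_sub_div_smul_add_eq_zero {E : Type*} [NormedAddCommGroup E] [InnerProductSpace ℝ E]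
    {q e : E} (he : ‖e‖ = 1) (hqe : 1 + ⟪q, e⟫ ≠ 0) (w : E) :
    ⟪e, w - (⟪e, w⟫ / (1 + ⟪q, e⟫)) • (q + e)⟫ = 0 := by
  have h : ⟪e, q + e⟫ = 1 + ⟪q, e⟫ := by
    rw [inner_add_right, real_inner_self_eq_norm_sq, he, real_inner_comm]
    ring
  rw [inner_sub_right, inner_smul_right, h, div_mul_cancel₀ _ hqe, sub_self]

theorem stmt_13_general {q : EuclideanSpace ℝ (Fin 4)}
    (e : EuclideanSpace ℝ (Fin 4)) (he : e = EuclideanSpace.single 0 1)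
    (hq1 : 1 + ⟪q, e⟫ ≠ 0)
    (P : EuclideanSpace ℝ (Fin 4) → EuclideanSpace ℝ (Fin 4))
    (Pr : EuclideanSpace ℝ (Fin 4) → EuclideanSpace ℝ (Fin 4))
    (hPr : ∀ v, Pr v = P v - (⟪e, P v⟫ / (1 + ⟪q, e⟫)) • (q + e)) :
    ∀ v, Pr v 0 = 0 := by
  intro v
  have he_norm : ‖e‖ = 1 := by simp [he]
  have h_coord : Pr v 0 = ⟪e, Pr v⟫ := by simp [he, EuclideanSpace.inner_single_left]
  rw [h_coord, hPr]
  exact inner_sub_div_smul_add_eq_zero he_norm hq1 (P v)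

theorem stmt_13 {q : EuclideanSpace ℝ (Fin 4)} (hq : ‖q‖ = 1)
    (e : EuclideanSpace ℝ (Fin 4)) (he : e = EuclideanSpace.single 0 1)
    (hq1 : 1 + ⟪q, e⟫ ≠ 0)
    (P : EuclideanSpace ℝ (Fin 4) → EuclideanSpace ℝ (Fin 4))
    (hP : ∀ v, P v = v - ⟪q, v⟫ • q)
    (Pr : EuclideanSpace ℝ (Fin 4) → EuclideanSpace ℝ (Fin 4))
    (hPr : ∀ v, Pr v = P v - (⟪e, P v⟫ / (1 + ⟪q, e⟫)) • (q + e)) :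
    ∀ v, Pr v 0 = 0 :=
  stmt_13_general e he hq1 P Pr hPr
end

section
/- For two unit quaternions q, p with q⁻¹p = (w, v), v ≠ 0, the norm of the logarithmic map satisfies ‖Log_q(p)‖ = arccos(w), and this equals the spherical geodesic distance arccos⟨q, p⟩ between q and p viewed as points of S^3 ⊂ ℝ^4. -/
open RealInnerProductSpace

namespace Quaternion

theorem inv_eq_star_of_norm_eq_one {q : ℍ[ℝ]} (hq : ‖q‖ = 1) : q⁻¹ = star q := by
  have : normSq q = 1 := by rw [normSq_eq_norm_mul_self, hq, one_mul]
  rw [inv_def, this, inv_one, one_smul]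

theorem re_star_mul_eq_inner (q p : ℍ[ℝ]) : (star q * p).re = ⟪q, p⟫ := by
  rw [inner_def, ← re_star, star_mul, star_star]
  simp only [re_mul, re_star, imI_star, imJ_star, imK_star]
  ring

end Quaternion

theorem norm_div_norm_smul {E : Type*} [NormedAddCommGroup E] [NormedSpace ℝ E]
    {r : ℝ} (hr : 0 ≤ r) {x : E} (hx : x ≠ 0) : ‖(r / ‖x‖) • x‖ = r := by
  simpa [div_eq_mul_inv] using norm_smul_inv_norm' (𝕜 := ℝ) hr hx

theorem stmt_16_general (q p : Quaternion ℝ) (hq : ‖q‖ = 1)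
    (m : Quaternion ℝ) (hm : m = q⁻¹ * p) (him : m.im ≠ 0) :
    ‖(Real.arccos m.re / ‖m.im‖) • m.im‖ = Real.arccos m.re ∧
    Real.arccos m.re = Real.arccos ⟪q, p⟫ := by
  refine ⟨norm_div_norm_smul (Real.arccos_nonneg _) him, ?_⟩
  rw [hm, Quaternion.inv_eq_star_of_norm_eq_one hq, Quaternion.re_star_mul_eq_inner]

theorem stmt_16 (q p : Quaternion ℝ) (hq : ‖q‖ = 1) (hp : ‖p‖ = 1)
    (m : Quaternion ℝ) (hm : m = q⁻¹ * p) (him : m.im ≠ 0) :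
    ‖(Real.arccos m.re / ‖m.im‖) • m.im‖ = Real.arccos m.re ∧
    Real.arccos m.re = Real.arccos ⟪q, p⟫ :=
  stmt_16_general q p hq m hm him
end
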